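/- arXiv:1809.09696 — 9 statements merged into one kernel-verified Lean document; each statement's English description precedes it below -/
import Mathlib

section
/- For all real t ≥ 1 and real q ≥ 2, (t+1) * (t^q + 1)^(q-2) ≥ (t^(q-1) + 1)^(q-1). -/
/-!
With `θ = (q - 2) / (q - 1)` the exponent `q - 1` is the convex combination
`(1 - θ) • 1 + θ • q`.
The moments `s ↦ ∑ i, x i ^ s` of a positive function are log-convex (Lyapunov's inequality,
a case of Hölder's inequality). For the two-point function with values `t` and `1` this gives
`t ^ (q - 1) + 1 ≤ (t + 1) ^ (1 - θ) * (t ^ q + 1) ^ θ`, and raising it to the power `q - 1`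
gives the claim.
-/

open Real Finset

theorem Real.sum_rpow_convexCombination_le {ι : Type*} (s : Finset ι) {x : ι → ℝ}
    (hx : ∀ i ∈ s, 0 < x i) (a b : ℝ) {θ : ℝ} (hθ₀ : 0 ≤ θ) (hθ₁ : θ ≤ 1) :
    ∑ i ∈ s, x i ^ ((1 - θ) * a + θ * b) ≤
      (∑ i ∈ s, x i ^ a) ^ (1 - θ) * (∑ i ∈ s, x i ^ b) ^ θ := by
  rcases hθ₀.eq_or_lt with rfl | hθ₀
  · simp
  rcases hθ₁.eq_or_lt with rfl | hθ₁
  · simp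
  have hpow (c : ℝ) (hc : c ≠ 0) (d : ℝ) (i : ι) (hi : i ∈ s) :
      (x i ^ (c * d)) ^ c⁻¹ = x i ^ d := by
    rw [← rpow_mul (hx i hi).le, mul_comm c, mul_assoc, mul_inv_cancel₀ hc, mul_one]
  calc ∑ i ∈ s, x i ^ ((1 - θ) * a + θ * b)
      = ∑ i ∈ s, x i ^ ((1 - θ) * a) * x i ^ (θ * b) :=
        sum_congr rfl fun i hi ↦ rpow_add (hx i hi) _ _
    _ ≤ (∑ i ∈ s, (x i ^ ((1 - θ) * a)) ^ (1 - θ)⁻¹) ^ (1 / (1 - θ)⁻¹) *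
          (∑ i ∈ s, (x i ^ (θ * b)) ^ θ⁻¹) ^ (1 / θ⁻¹) :=
        inner_le_Lp_mul_Lq_of_nonneg s (HolderConjugate.one_sub_inv_inv hθ₀ hθ₁)
          (fun i hi ↦ (rpow_pos_of_pos (hx i hi) _).le)
          (fun i hi ↦ (rpow_pos_of_pos (hx i hi) _).le)
    _ = (∑ i ∈ s, x i ^ a) ^ (1 - θ) * (∑ i ∈ s, x i ^ b) ^ θ := by
      simp only [one_div, inv_inv]
      rw [sum_congr rfl (hpow _ (sub_pos.mpr hθ₁).ne' a), sum_congr rfl (hpow _ hθ₀.ne' b)]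

theorem key_algebraic_inequality (t q : ℝ) (ht : 1 ≤ t) (hq : 2 ≤ q) :
    (t + 1) * (t ^ q + 1) ^ (q - 2) ≥ (t ^ (q - 1) + 1) ^ (q - 1) := by
  have hq₁ : 0 < q - 1 := by linarith
  set θ := (q - 2) / (q - 1) with hθ
  have lyapunov := sum_rpow_convexCombination_le univ (x := ![t, 1])
    (by simp [Fin.forall_fin_two]; linarith) 1 q (θ := θ)
    (div_nonneg (by linarith) hq₁.le) (div_le_one_of_le₀ (by linarith) hq₁.le)
  have hexp : (1 - θ) * 1 + θ * q = q - 1 := by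
    rw [hθ]; field_simp; ring
  have hexp₁ : (1 - θ) * (q - 1) = 1 := by
    rw [hθ]; field_simp; ring
  have hexp₂ : θ * (q - 1) = q - 2 := div_mul_cancel₀ _ hq₁.ne'
  simp only [Fin.sum_univ_two, Matrix.cons_val_zero, Matrix.cons_val_one, one_rpow, rpow_one,
    hexp] at lyapunov
  calc (t ^ (q - 1) + 1) ^ (q - 1)
      ≤ ((t + 1) ^ (1 - θ) * (t ^ q + 1) ^ θ) ^ (q - 1) := by gcongr
    _ = (t + 1) * (t ^ q + 1) ^ (q - 2) := by
      rw [mul_rpow (by positivity) (by positivity), ← rpow_mul (by positivity),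
        ← rpow_mul (by positivity), hexp₁, hexp₂, rpow_one]
end

section
/- For all real t ≥ 1 and real q ≥ 2, log₂((((t+1)^q)/(t^q+1))^(1/(q-1))) ≥ (t^(q-1) + t)/(t^q + 1). -/
/-!
With `w = (t^(q-1) + t) / (t^q + 1) ∈ [0, 1]` one has `1 + w = (1 + t)(1 + t^(q-1)) / (1 + t^q)`.
Concavity of `log` gives `w · log 2 ≤ log (1 + w)`, and convexity of `p ↦ log (1 + t^p)`
(a softplus in `p · log t`), at `q - 1 = (1/(q-1)) · 1 + ((q-2)/(q-1)) · q`, bounds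
`(q - 1) log (1 + t^(q-1))` by `log (1 + t) + (q - 2) log (1 + t^q)`.
Together these give `(q - 1) w log 2 ≤ q log (1 + t) - log (1 + t^q)`, which is the claim.
-/

open Real Set

lemma convexOn_log_one_add_exp : ConvexOn ℝ univ fun x : ℝ => log (1 + exp x) := by
  have hderiv (x : ℝ) : HasDerivAt (fun x => log (1 + exp x)) (exp x / (1 + exp x)) x :=
    ((hasDerivAt_exp x).const_add 1).log (by positivity)
  refine Monotone.convexOn_univ_of_deriv (fun x => (hderiv x).differentiableAt) ?_
  intro x y hxy
  rw [(hderiv x).deriv, (hderiv y).deriv, div_le_div_iff₀ (by positivity) (by positivity)]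
  nlinarith [exp_le_exp.2 hxy]

lemma convexOn_log_one_add_rpow {t : ℝ} (ht : 0 < t) :
    ConvexOn ℝ univ fun p : ℝ => log (1 + t ^ p) := by
  have := convexOn_log_one_add_exp.comp_linearMap (LinearMap.mulLeft ℝ (log t))
  simpa [Function.comp_def, rpow_def_of_pos ht] using this

lemma mul_log_one_add_rpow_sub_one_le {t q : ℝ} (ht : 0 < t) (hq : 2 ≤ q) :
    (q - 1) * log (1 + t ^ (q - 1)) ≤ log (1 + t) + (q - 2) * log (1 + t ^ q) := by
  have hq1 : 0 < q - 1 := by linarith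
  have hab : 1 / (q - 1) + (q - 2) / (q - 1) = 1 := by
    rw [← add_div, div_eq_one_iff_eq hq1.ne']; ring
  have hconv := (convexOn_log_one_add_rpow ht).2 (mem_univ 1) (mem_univ q)
    (by positivity) (div_nonneg (by linarith) hq1.le) hab
  have hmid : 1 / (q - 1) * 1 + (q - 2) / (q - 1) * q = q - 1 := by
    field_simp; ring
  simp only [smul_eq_mul, hmid, rpow_one] at hconv
  calc (q - 1) * log (1 + t ^ (q - 1))
      ≤ (q - 1) * (1 / (q - 1) * log (1 + t) + (q - 2) / (q - 1) * log (1 + t ^ q)) :=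
        mul_le_mul_of_nonneg_left hconv hq1.le
    _ = log (1 + t) + (q - 2) * log (1 + t ^ q) := by field_simp

lemma mul_log_two_le_log_one_add {w : ℝ} (h0 : 0 ≤ w) (h1 : w ≤ 1) :
    w * log 2 ≤ log (1 + w) := by
  have := strictConcaveOn_log_Ioi.concaveOn.2 (mem_Ioi.2 one_pos) (mem_Ioi.2 two_pos)
    (sub_nonneg.2 h1) h0 (sub_add_cancel 1 w)
  rwa [smul_eq_mul, smul_eq_mul, smul_eq_mul, smul_eq_mul, log_one, mul_zero, zero_add,
    show (1 - w) * 1 + w * 2 = 1 + w by ring] at this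

lemma rpow_sub_one_add_le_rpow_add_one {t q : ℝ} (ht : 1 ≤ t) (hq : 1 ≤ q) :
    t ^ (q - 1) + t ≤ t ^ q + 1 := by
  have hpow : 1 ≤ t ^ (q - 1) := one_le_rpow ht (by linarith)
  have : t ^ q = t * t ^ (q - 1) := by
    rw [← rpow_one_add' (by linarith) (by linarith), add_sub_cancel]
  nlinarith [mul_le_mul_of_nonneg_left hpow (by linarith : (0:ℝ) ≤ t - 1)]

theorem two_point_log_ineq (t q : ℝ) (ht : 1 ≤ t) (hq : 2 ≤ q) :
    Real.logb 2 (((t + 1) ^ q / (t ^ q + 1)) ^ (1 / (q - 1))) ≥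
      (t ^ (q - 1) + t) / (t ^ q + 1) := by
  have ht0 : 0 < t := by linarith
  have hq1 : 0 < q - 1 := by linarith
  have hw0 : 0 ≤ (t ^ (q - 1) + t) / (t ^ q + 1) := by positivity
  have hw1 : (t ^ (q - 1) + t) / (t ^ q + 1) ≤ 1 :=
    (div_le_one (by positivity)).2 (rpow_sub_one_add_le_rpow_add_one ht (by linarith))
  have hlog_one_add : log (1 + (t ^ (q - 1) + t) / (t ^ q + 1))
      = log (1 + t) + log (1 + t ^ (q - 1)) - log (1 + t ^ q) := by
    rw [← log_mul (by positivity) (by positivity), ← log_div (by positivity) (by positivity),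
      rpow_sub_one ht0.ne']
    congr 1
    field_simp
    ring
  have hlogb : logb 2 (((t + 1) ^ q / (t ^ q + 1)) ^ (1 / (q - 1)))
      = (q * log (1 + t) - log (1 + t ^ q)) / ((q - 1) * log 2) := by
    rw [← log_div_log, log_rpow (by positivity), log_div (by positivity) (by positivity),
      log_rpow (by positivity), add_comm t, add_comm (t ^ q)]
    field_simp
  rw [ge_iff_le, hlogb, le_div_iff₀ (by positivity)]
  have hconcave := mul_le_mul_of_nonneg_left (mul_log_two_le_log_one_add hw0 hw1) hq1.le
  rw [hlog_one_add] at hconcave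
  linarith [mul_log_one_add_rpow_sub_one_le ht0 hq]
end

section
/- Let g : Fin 2 → ℝ be nonnegative with (g 0 + g 1)/2 = 1 and let q ≥ 2 be real. Then (g(0)^(q-1) - g(1)^(q-1)) * (g(0) - g(1)) ≥ (2/ln 2) * (1/(q-1)) * ((g(0)^q + g(1)^q)/2) * ln((g(0)^q + g(1)^q)/2). -/
open Real Set

/-!
Write `a = g 0 ≥ b = g 1`, `x = b / a ∈ [0, 1]` and `y = x ^ (q - 1) ≤ x`. Since `a = 2 / (1 + x)`,
the inequality reduces to `(q - 1) log 2 (x + y) ≤ (1 + x y) (q log (1 + x) - log (1 + x y))`, which,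
multiplied by `-log x ≥ 0` and using `log y = (q - 1) log x`, reads `0 ≤ decoupledGap y x`.
The point is to forget that `y` depends on `x`: for fixed `y`, `decoupledGap y` is concave on
`[y, 1]`, vanishes at `1`, and is nonnegative at `y` by the chord bound `w log 2 ≤ log (1 + w)`
for `w = 2 y / (1 + y ^ 2) ∈ [0, 1]`.
-/

lemma log_two_mul_le_log_one_add {w : ℝ} (h0 : 0 ≤ w) (h1 : w ≤ 1) :
    log 2 * w ≤ log (1 + w) := by
  have h := strictConcaveOn_log_Ioi.concaveOn.2 (x := 1) (y := 2) (by norm_num) (by norm_num)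
    (sub_nonneg.2 h1) h0 (by ring)
  simp only [smul_eq_mul, log_one, mul_zero, zero_add] at h
  rw [mul_comm]
  exact h.trans_eq (congrArg log (by ring))

section

variable {x y : ℝ}

noncomputable def decoupledGap (y x : ℝ) : ℝ :=
  (1 + x * y) * (-log y * log (1 + x) - log x * (log (1 + x) - log (1 + x * y)))
    + log y * log 2 * (x + y)

noncomputable def decoupledGapDeriv (y x : ℝ) : ℝ :=
  y * (-log y * log (1 + x) - log x * (log (1 + x) - log (1 + x * y)))
    + (1 + x * y) * (-log y / (1 + x) - (log (1 + x) - log (1 + x * y)) / x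
        - log x * (1 / (1 + x) - y / (1 + x * y)))
    + log y * log 2

noncomputable def decoupledGapDeriv2 (y x : ℝ) : ℝ :=
  (log (1 + x) - log (1 + x * y)) * (1 - x * y) / x ^ 2
    + (-log y - log x) * (2 * y + x * y - 1) / (1 + x) ^ 2
    + log x * y ^ 2 / (1 + x * y) - 2 * (1 - y) / (x * (1 + x))

lemma hasDerivAt_decoupledGap (hx : 0 < x) (hy : 0 ≤ y) :
    HasDerivAt (decoupledGap y) (decoupledGapDeriv y x) x := by
  have hx1 : 0 < 1 + x := by linarith
  have hxy : 0 < 1 + x * y := by positivity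
  have h1x : HasDerivAt (fun t => 1 + t) 1 x := (hasDerivAt_id x).const_add 1
  have h1xy : HasDerivAt (fun t => 1 + t * y) y x := by
    simpa using ((hasDerivAt_id x).mul_const y).const_add 1
  have hlog := hasDerivAt_log hx.ne'
  have hlog1x := h1x.log hx1.ne'
  have hlog1xy := h1xy.log hxy.ne'
  have := (h1xy.mul (((hlog1x.const_mul (-log y)).sub (hlog.mul (hlog1x.sub hlog1xy))))).add
    (((hasDerivAt_id x).add_const y).const_mul (log y * log 2))
  refine this.congr_deriv ?_
  simp only [decoupledGapDeriv, Pi.sub_apply, Pi.mul_apply]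
  field_simp
  ring

lemma hasDerivAt_decoupledGapDeriv (hx : 0 < x) (hy : 0 ≤ y) :
    HasDerivAt (decoupledGapDeriv y) (decoupledGapDeriv2 y x) x := by
  have hx1 : 0 < 1 + x := by linarith
  have hxy : 0 < 1 + x * y := by positivity
  have h1x : HasDerivAt (fun t => 1 + t) 1 x := (hasDerivAt_id x).const_add 1
  have h1xy : HasDerivAt (fun t => 1 + t * y) y x := by
    simpa using ((hasDerivAt_id x).mul_const y).const_add 1
  have hlog := hasDerivAt_log hx.ne'
  have hlog1x := h1x.log hx1.ne'
  have hlog1xy := h1xy.log hxy.ne'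
  have hD := hlog1x.sub hlog1xy
  have hG := (hlog1x.const_mul (-log y)).sub (hlog.mul hD)
  have hG' := (((hasDerivAt_const x (-log y)).div h1x hx1.ne').sub
    (hD.div (hasDerivAt_id x) hx.ne')).sub (hlog.mul
      (((hasDerivAt_const x 1).div h1x hx1.ne').sub ((hasDerivAt_const x y).div h1xy hxy.ne')))
  have := ((hG.const_mul y).add (h1xy.mul hG')).add_const (log y * log 2)
  refine this.congr_deriv ?_
  simp only [decoupledGapDeriv2, Pi.sub_apply, Pi.mul_apply, Pi.div_apply, id]
  field_simp
  ring

lemma curvature_bound (hy : 0 < y) (hyx : y ≤ x) (hx : x ≤ 1) :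
    (1 - y) * (1 - x * y) / (x * (1 + x * y)) + ((1 - y) / y + (1 - x) / x) * (2 * y + x * y - 1)
      / (1 + x) ^ 2 ≤ 2 * (1 - y) / (x * (1 + x)) := by
  have hx0 : 0 < x := hy.trans_le hyx
  field_simp
  nlinarith [sq_nonneg (x - y), sq_nonneg (1 - y), mul_pos hy hy,
    mul_nonneg hy.le (sub_nonneg.2 hx),
    mul_nonneg (mul_nonneg hy.le (sub_nonneg.2 hx)) (sub_nonneg.2 hx),
    mul_nonneg (mul_nonneg (mul_nonneg hy.le (sub_nonneg.2 hx)) (sub_nonneg.2 hx)) (sub_nonneg.2 hyx)]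

/-- The three logarithms are bounded through `log t ≤ t - 1`, which leaves a rational inequality. -/
lemma decoupledGapDeriv2_nonpos (hy : 0 < y) (hyx : y ≤ x) (hx : x ≤ 1) :
    decoupledGapDeriv2 y x ≤ 0 := by
  have hx0 : 0 < x := hy.trans_le hyx
  have hx1 : 0 < 1 + x := by linarith
  have hxy : 0 < 1 + x * y := by positivity
  have hxy1 : 0 ≤ 1 - x * y := by nlinarith
  have hlog_ratio : log (1 + x) - log (1 + x * y) ≤ x * (1 - y) / (1 + x * y) := by
    rw [← log_div hx1.ne' hxy.ne']
    calc _ ≤ (1 + x) / (1 + x * y) - 1 := log_le_sub_one_of_pos (by positivity)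
      _ = _ := by field_simp; ring
  have hneg_log (t : ℝ) (ht : 0 < t) : -log t ≤ (1 - t) / t := by
    rw [sub_div, div_self ht.ne', one_div]
    linarith [one_sub_inv_le_log_of_pos ht]
  have hT1 : (log (1 + x) - log (1 + x * y)) * (1 - x * y) / x ^ 2
      ≤ (1 - y) * (1 - x * y) / (x * (1 + x * y)) :=
    calc _ ≤ x * (1 - y) / (1 + x * y) * (1 - x * y) / x ^ 2 := by gcongr
      _ = _ := by field_simp
  have hT3 : log x * y ^ 2 / (1 + x * y) ≤ 0 :=
    div_nonpos_of_nonpos_of_nonneg (mul_nonpos_of_nonpos_of_nonneg (log_nonpos hx0.le hx)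
      (sq_nonneg y)) hxy.le
  have hlog_sum : 0 ≤ -log y - log x := by
    linarith [log_nonpos hx0.le hx, log_nonpos hy.le (hyx.trans hx)]
  unfold decoupledGapDeriv2
  rcases le_total (2 * y + x * y) 1 with hc | hc
  · have hT2 : (-log y - log x) * (2 * y + x * y - 1) / (1 + x) ^ 2 ≤ 0 :=
      div_nonpos_of_nonpos_of_nonneg (mul_nonpos_of_nonneg_of_nonpos hlog_sum (by linarith))
        (by positivity)
    have hfirst : (1 - y) * (1 - x * y) / (x * (1 + x * y)) ≤ 2 * (1 - y) / (x * (1 + x)) := by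
      have : 0 ≤ (1 - y) * (1 - x + x * y * (3 + x)) :=
        mul_nonneg (by linarith) (add_nonneg (sub_nonneg.2 hx) (by positivity))
      field_simp
      nlinarith
    linarith
  · have hT2 : (-log y - log x) * (2 * y + x * y - 1) / (1 + x) ^ 2
        ≤ ((1 - y) / y + (1 - x) / x) * (2 * y + x * y - 1) / (1 + x) ^ 2 := by
      gcongr
      linarith [hneg_log y hy, hneg_log x hx0]
    linarith [curvature_bound hy hyx hx]

lemma concaveOn_decoupledGap (hy : 0 < y) : ConcaveOn ℝ (Icc y 1) (decoupledGap y) := by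
  have hpos {t : ℝ} (ht : y ≤ t) : 0 < t := hy.trans_le ht
  refine concaveOn_of_hasDerivWithinAt2_nonpos (f' := decoupledGapDeriv y)
    (f'' := decoupledGapDeriv2 y) (convex_Icc y 1) ?_ ?_ ?_ ?_
  · exact fun t ht ↦ (hasDerivAt_decoupledGap (hpos ht.1) hy.le).continuousAt.continuousWithinAt
  all_goals rw [interior_Icc]
  · exact fun t ht ↦ (hasDerivAt_decoupledGap (hpos ht.1.le) hy.le).hasDerivWithinAt
  · exact fun t ht ↦ (hasDerivAt_decoupledGapDeriv (hpos ht.1.le) hy.le).hasDerivWithinAt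
  · exact fun t ht ↦ decoupledGapDeriv2_nonpos hy ht.1.le ht.2.le

lemma decoupledGap_one (y : ℝ) : decoupledGap y 1 = 0 := by
  simp only [decoupledGap, log_one, one_add_one_eq_two]
  ring

lemma decoupledGap_self_nonneg (hy0 : 0 ≤ y) (hy1 : y ≤ 1) : 0 ≤ decoupledGap y y := by
  have hy2 : 0 < 1 + y ^ 2 := by positivity
  have hchord : log 2 * (2 * y / (1 + y ^ 2)) ≤ log (1 + 2 * y / (1 + y ^ 2)) :=
    log_two_mul_le_log_one_add (by positivity)
      ((div_le_one hy2).2 (by nlinarith [sq_nonneg (1 - y)]))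
  have hlog : log (1 + 2 * y / (1 + y ^ 2)) = 2 * log (1 + y) - log (1 + y ^ 2) := by
    rw [show 2 * log (1 + y) = log ((1 + y) ^ 2) by rw [log_pow]; norm_num,
      ← log_div (by positivity) hy2.ne']
    congr 1
    field_simp
    ring
  have hbracket : 0 ≤ (1 + y ^ 2) * (2 * log (1 + y) - log (1 + y ^ 2)) - 2 * y * log 2 := by
    rw [← hlog, sub_nonneg]
    calc 2 * y * log 2 = (1 + y ^ 2) * (log 2 * (2 * y / (1 + y ^ 2))) := by field_simp
      _ ≤ _ := by gcongr
  have hexpand : decoupledGap y y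
      = -log y * ((1 + y ^ 2) * (2 * log (1 + y) - log (1 + y ^ 2)) - 2 * y * log 2) := by
    unfold decoupledGap
    ring_nf
  rw [hexpand]
  exact mul_nonneg (neg_nonneg.2 (log_nonpos hy0 hy1)) hbracket

lemma decoupledGap_nonneg (hy : 0 < y) (hyx : y ≤ x) (hx : x ≤ 1) : 0 ≤ decoupledGap y x := by
  have hy1 : y ≤ 1 := hyx.trans hx
  have h := (concaveOn_decoupledGap hy).ge_on_segment (left_mem_Icc.2 hy1) (right_mem_Icc.2 hy1)
    (by rw [segment_eq_Icc hy1]; exact ⟨hyx, hx⟩)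
  rw [decoupledGap_one] at h
  exact (le_min (decoupledGap_self_nonneg hy.le hy1) le_rfl).trans h

end

lemma log_two_mul_add_rpow_le {x q : ℝ} (hx0 : 0 ≤ x) (hx1 : x ≤ 1) (hq : 2 ≤ q) :
    (q - 1) * log 2 * (x + x ^ (q - 1))
      ≤ (1 + x * x ^ (q - 1)) * (q * log (1 + x) - log (1 + x * x ^ (q - 1))) := by
  rcases hx0.eq_or_lt with rfl | hx0
  · simp [zero_rpow (by linarith : q - 1 ≠ 0)]
  rcases hx1.eq_or_lt with rfl | hx1
  · simp only [one_rpow, mul_one, one_add_one_eq_two]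
    linarith
  set y := x ^ (q - 1)
  have hy : 0 < y := rpow_pos_of_pos hx0 _
  have hyx : y ≤ x := rpow_le_self_of_le_one hx0.le hx1.le (by linarith)
  have hlog_y : log y = (q - 1) * log x := log_rpow hx0 _
  have hF : decoupledGap y x = -log x
      * ((1 + x * y) * (q * log (1 + x) - log (1 + x * y)) - (q - 1) * log 2 * (x + y)) := by
    rw [decoupledGap, hlog_y]
    ring
  have h := decoupledGap_nonneg hy hyx hx1.le
  rw [hF] at h
  exact sub_nonneg.1 (nonneg_of_mul_nonneg_right h (neg_pos.2 (log_neg hx0 hx1)))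

lemma two_point_logSobolev_of_le {a b q : ℝ} (hb : 0 ≤ b) (hba : b ≤ a) (hab : a + b = 2)
    (hq : 2 ≤ q) :
    2 / log 2 * (1 / (q - 1)) * ((a ^ q + b ^ q) / 2) * log ((a ^ q + b ^ q) / 2)
      ≤ (a ^ (q - 1) - b ^ (q - 1)) * (a - b) := by
  have ha : 0 < a := by linarith
  have hlog2 : 0 < log 2 := log_pos one_lt_two
  set x := b / a
  have hx0 : 0 ≤ x := div_nonneg hb ha.le
  have hx1 : x ≤ 1 := (div_le_one ha).2 hba
  have hb_eq : b = a * x := (mul_div_cancel₀ b ha.ne').symm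
  set y := x ^ (q - 1)
  have hxy : 0 < 1 + x * y := by positivity
  have hsplit {t : ℝ} (ht : 0 ≤ t) : t ^ q = t * t ^ (q - 1) := by
    rw [← rpow_one_add' ht (by linarith), add_sub_cancel]
  have hbq1 : b ^ (q - 1) = a ^ (q - 1) * y := by rw [hb_eq, mul_rpow ha.le hx0]
  have hmean : (a ^ q + b ^ q) / 2 = a ^ q * (1 + x * y) / 2 := by
    rw [hb_eq, mul_rpow ha.le hx0, hsplit hx0]
    ring
  have ha_eq : a = 2 / (1 + x) := by
    field_simp
    linarith
  have hlog_mean : log ((a ^ q + b ^ q) / 2)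
      = (q - 1) * log 2 - (q * log (1 + x) - log (1 + x * y)) := by
    rw [hmean, log_div (by positivity) two_ne_zero, log_mul (by positivity) hxy.ne',
      log_rpow ha, ha_eq, log_div two_ne_zero (by positivity)]
    ring
  have hq1 : 0 < q - 1 := by linarith
  calc _ = a ^ q / ((q - 1) * log 2) * ((1 + x * y) * ((q - 1) * log 2)
          - (1 + x * y) * (q * log (1 + x) - log (1 + x * y))) := by
        rw [hlog_mean, hmean]
        field_simp
    _ ≤ a ^ q / ((q - 1) * log 2) * ((1 + x * y) * ((q - 1) * log 2)
          - (q - 1) * log 2 * (x + y)) :=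
        mul_le_mul_of_nonneg_left (sub_le_sub_left (log_two_mul_add_rpow_le hx0 hx1 hq) _)
          (by positivity)
    _ = _ := by
        rw [hbq1, hb_eq, hsplit ha.le]
        field_simp
        ring

theorem two_point_logSobolev_q_ge_two (g : Fin 2 → ℝ) (hg : ∀ i, 0 ≤ g i)
    (hmean : (g 0 + g 1) / 2 = 1) (q : ℝ) (hq : 2 ≤ q) :
    (g 0 ^ (q - 1) - g 1 ^ (q - 1)) * (g 0 - g 1) ≥
      2 / Real.log 2 * (1 / (q - 1)) * ((g 0 ^ q + g 1 ^ q) / 2) *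
        Real.log ((g 0 ^ q + g 1 ^ q) / 2) := by
  have hsum : g 0 + g 1 = 2 := by linarith
  rcases le_total (g 1) (g 0) with h | h
  · exact two_point_logSobolev_of_le (hg 1) h hsum hq
  · rw [ge_iff_le, add_comm (g 0 ^ q)]
    convert two_point_logSobolev_of_le (hg 0) h (by linarith) hq using 1
    ring
end

section
/- Let g : Fin 2 → ℝ be nonnegative with (g 0 + g 1)/2 = 1 and let 1 < q < 2 be real. Setting r(q) = 2^(3-q) * (2^(q-1) - 1) / (q(q-1)), one has (g(0)^(q-1) - g(1)^(q-1)) * (g(0) - g(1)) ≥ (2/ln 2) * r(q) * ((g(0)^q + g(1)^q)/2) * ln((g(0)^q + g(1)^q)/2). -/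
open Real Set

/-!
Write `g = (1 + t, 1 - t)` with `0 ≤ t ≤ 1` and `E = ((1 + t) ^ q + (1 - t) ^ q) / 2`, which
lies in `[1, 2 ^ (q - 1)]`. The function `φ t = (1 + t) ^ (q - 1) - (1 - t) ^ (q - 1)` is convex
on `[0, 1)`, as `φ'' t = (q - 1) (q - 2) ((1 + t) ^ (q - 3) - (1 - t) ^ (q - 3)) ≥ 0`, and
`φ 0 = 0`, so `φ ≤ t φ'`. This is exactly the sign that makes `q t φ t - 4 (E - 1)` nondecreasing
in `t`, whence the Dirichlet form `2 t φ t` is at least `8 (E - 1) / q`. On the other side,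
`x log x` is convex, so on `[1, 2 ^ (q - 1)]` it lies below its secant through `1`, and `r(q)` is
precisely the constant for which this secant bound reads `(2 / log 2) r(q) E log E ≤ 8 (E - 1) / q`.
-/

lemma nonneg_of_hasDerivAt_nonneg {f f' : ℝ → ℝ} {t : ℝ} (ht : 0 ≤ t)
    (hf : ContinuousOn f (Icc 0 t)) (hf0 : f 0 = 0)
    (hf' : ∀ x ∈ Ioo 0 t, HasDerivAt f (f' x) x) (hf'_nonneg : ∀ x ∈ Ioo 0 t, 0 ≤ f' x) :
    0 ≤ f t := by
  have hmono : MonotoneOn f (Icc 0 t) := by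
    refine monotoneOn_of_hasDerivWithinAt_nonneg (f' := f') (convex_Icc 0 t) hf ?_ ?_ <;>
      rw [interior_Icc]
    · exact fun x hx => (hf' x hx).hasDerivWithinAt
    · exact hf'_nonneg
  simpa [hf0] using hmono (left_mem_Icc.2 ht) (right_mem_Icc.2 ht) ht

lemma mul_log_le_secant {x M : ℝ} (hM : 1 < M) (hx1 : 1 ≤ x) (hxM : x ≤ M) :
    x * log x ≤ (x - 1) * (M * log M / (M - 1)) := by
  rcases hx1.eq_or_lt with rfl | hx1
  · simp
  have h := Real.convexOn_mul_log.secant_mono (a := 1) (x := x) (y := M) (mem_Ici.2 zero_le_one)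
    (mem_Ici.2 (by linarith)) (mem_Ici.2 (by linarith)) hx1.ne' hM.ne' hxM
  simp only [log_one, mul_zero, sub_zero] at h
  rw [div_le_iff₀ (sub_pos.2 hx1)] at h
  linarith

namespace TwoPoint

noncomputable def powSum (p t : ℝ) : ℝ := (1 + t) ^ p + (1 - t) ^ p

noncomputable def powDiff (p t : ℝ) : ℝ := (1 + t) ^ p - (1 - t) ^ p

variable {p t : ℝ}

lemma hasDerivAt_one_add_rpow (p : ℝ) (ht : |t| < 1) :
    HasDerivAt (fun s : ℝ => (1 + s) ^ p) (p * (1 + t) ^ (p - 1)) t := by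
  have h : (0 : ℝ) < 1 + t := by linarith [neg_abs_le t]
  simpa using ((hasDerivAt_id t).const_add 1).rpow_const (p := p) (Or.inl h.ne')

lemma hasDerivAt_one_sub_rpow (p : ℝ) (ht : |t| < 1) :
    HasDerivAt (fun s : ℝ => (1 - s) ^ p) (-(p * (1 - t) ^ (p - 1))) t := by
  have h : (0 : ℝ) < 1 - t := by linarith [le_abs_self t]
  simpa using ((hasDerivAt_id t).const_sub 1).rpow_const (p := p) (Or.inl h.ne')

lemma hasDerivAt_powSum (p : ℝ) (ht : |t| < 1) :
    HasDerivAt (powSum p) (p * powDiff (p - 1) t) t := by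
  refine ((hasDerivAt_one_add_rpow p ht).add (hasDerivAt_one_sub_rpow p ht)).congr_deriv ?_
  simp only [powDiff]; ring

lemma hasDerivAt_powDiff (p : ℝ) (ht : |t| < 1) :
    HasDerivAt (powDiff p) (p * powSum (p - 1) t) t := by
  refine ((hasDerivAt_one_add_rpow p ht).sub (hasDerivAt_one_sub_rpow p ht)).congr_deriv ?_
  simp only [powSum]; ring

lemma continuous_powSum (hp : 0 ≤ p) : Continuous (powSum p) := by
  unfold powSum; fun_prop (disch := exact hp)

lemma continuous_powDiff (hp : 0 ≤ p) : Continuous (powDiff p) := by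
  unfold powDiff; fun_prop (disch := exact hp)

lemma powDiff_nonpos (hp : p ≤ 0) (ht0 : 0 ≤ t) (ht1 : t < 1) : powDiff p t ≤ 0 :=
  sub_nonpos.2 (rpow_le_rpow_of_nonpos (by linarith) (by linarith) hp)

lemma powDiff_le_mul_powSum (hp0 : 0 ≤ p) (hp1 : p ≤ 1) (ht0 : 0 ≤ t) (ht1 : t < 1) :
    powDiff p t ≤ p * t * powSum (p - 1) t := by
  have hderiv : ∀ x ∈ Icc 0 t, HasDerivAt (fun s => p * s * powSum (p - 1) s - powDiff p s)
      (p * (p - 1) * (x * powDiff (p - 1 - 1) x)) x := by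
    intro x hx
    have hx1 : |x| < 1 := by rw [abs_of_nonneg hx.1]; linarith [hx.2]
    refine ((((hasDerivAt_id x).const_mul p).mul (hasDerivAt_powSum (p - 1) hx1)).sub
      (hasDerivAt_powDiff p hx1)).congr_deriv ?_
    simp only [id]; ring
  have h := nonneg_of_hasDerivAt_nonneg ht0
    (fun x hx => (hderiv x hx).continuousAt.continuousWithinAt) (by simp [powDiff])
    (fun x hx => hderiv x (Ioo_subset_Icc_self hx)) fun x hx =>
      mul_nonneg_of_nonpos_of_nonpos (mul_nonpos_of_nonneg_of_nonpos hp0 (by linarith))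
        (mul_nonpos_of_nonneg_of_nonpos hx.1.le
          (powDiff_nonpos (by linarith) hx.1.le (hx.2.trans ht1)))
  linarith

variable {q : ℝ}

lemma two_mul_powSum_sub_two_le (hq1 : 1 ≤ q) (hq2 : q ≤ 2) (ht0 : 0 ≤ t) (ht1 : t ≤ 1) :
    2 * (powSum q t - 2) ≤ q * t * powDiff (q - 1) t := by
  have hderiv : ∀ x ∈ Ioo 0 t,
      HasDerivAt (fun s => q * s * powDiff (q - 1) s - 2 * (powSum q s - 2))
      (q * ((q - 1) * x * powSum (q - 1 - 1) x - powDiff (q - 1) x)) x := by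
    intro x hx
    have hx1 : |x| < 1 := by rw [abs_of_pos hx.1]; linarith [hx.2]
    refine ((((hasDerivAt_id x).const_mul q).mul (hasDerivAt_powDiff (q - 1) hx1)).sub
      (((hasDerivAt_powSum q hx1).sub_const 2).const_mul 2)).congr_deriv ?_
    simp only [id]; ring
  have hcont : Continuous fun s => q * s * powDiff (q - 1) s - 2 * (powSum q s - 2) := by
    have := continuous_powDiff (sub_nonneg.2 hq1)
    have := continuous_powSum (zero_le_one.trans hq1)
    fun_prop
  have h := nonneg_of_hasDerivAt_nonneg ht0 hcont.continuousOn (by simp [powDiff, powSum]; norm_num)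
    hderiv fun x hx => mul_nonneg (by linarith) (sub_nonneg.2 <|
      powDiff_le_mul_powSum (by linarith) (by linarith) hx.1.le (hx.2.trans_le ht1))
  linarith

noncomputable def logSobolevConst (q : ℝ) : ℝ :=
  (2 : ℝ) ^ (3 - q) * ((2 : ℝ) ^ (q - 1) - 1) / (q * (q - 1))

lemma one_le_powSum_div_two (hq : 1 ≤ q) (ht : |t| ≤ 1) : 1 ≤ powSum q t / 2 := by
  have h₁ := one_add_mul_self_le_rpow_one_add (neg_le_of_abs_le ht) hq
  have h₂ := one_add_mul_self_le_rpow_one_add (neg_le_neg (le_of_abs_le ht)) hq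
  simp only [powSum, ← sub_eq_add_neg] at h₂ ⊢
  linarith

lemma powSum_div_two_le (hq : 1 ≤ q) (ht : |t| ≤ 1) : powSum q t / 2 ≤ 2 ^ (q - 1) := by
  have h := add_rpow_le_rpow_add (by linarith [neg_le_of_abs_le ht] : (0 : ℝ) ≤ 1 + t)
    (by linarith [le_of_abs_le ht] : 0 ≤ 1 - t) hq
  rw [show 1 + t + (1 - t) = (2 : ℝ) by ring] at h
  simp only [powSum, rpow_sub_one two_ne_zero]
  linarith

lemma two_div_log_two_mul_logSobolevConst_mul_secant (hq : 1 < q) :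
    2 / log 2 * logSobolevConst q *
      ((2 : ℝ) ^ (q - 1) * log ((2 : ℝ) ^ (q - 1)) / ((2 : ℝ) ^ (q - 1) - 1)) = 8 / q := by
  have h4 : (2 : ℝ) ^ (3 - q) * (2 : ℝ) ^ (q - 1) = 4 := by
    rw [← rpow_add two_pos]; norm_num
  have : log 2 ≠ 0 := (log_pos one_lt_two).ne'
  have : q ≠ 0 := by linarith
  have : q - 1 ≠ 0 := by linarith
  have : (2 : ℝ) ^ (q - 1) - 1 ≠ 0 := (sub_pos.2 (one_lt_rpow one_lt_two (by linarith))).ne'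
  rw [log_rpow two_pos, logSobolevConst]
  field_simp
  linear_combination 2 * h4

lemma logSobolevConst_pos (hq : 1 < q) : 0 < logSobolevConst q := by
  have : 0 < (2 : ℝ) ^ (q - 1) - 1 := sub_pos.2 (one_lt_rpow one_lt_two (by linarith))
  have : 0 < q - 1 := by linarith
  unfold logSobolevConst
  positivity

lemma logSobolev_one_add_one_sub (hq1 : 1 < q) (hq2 : q < 2) (ht0 : 0 ≤ t) (ht1 : t ≤ 1) :
    2 / log 2 * logSobolevConst q * (powSum q t / 2) * log (powSum q t / 2) ≤
      2 * t * powDiff (q - 1) t := by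
  have ht : |t| ≤ 1 := abs_le.2 ⟨by linarith, ht1⟩
  have hc : 0 ≤ 2 / log 2 * logSobolevConst q :=
    mul_nonneg (div_nonneg zero_le_two (log_pos one_lt_two).le) (logSobolevConst_pos hq1).le
  have hsecant := mul_log_le_secant (one_lt_rpow one_lt_two (by linarith))
    (one_le_powSum_div_two hq1.le ht) (powSum_div_two_le hq1.le ht)
  have hgap := two_mul_powSum_sub_two_le hq1.le hq2.le ht0 ht1
  calc 2 / log 2 * logSobolevConst q * (powSum q t / 2) * log (powSum q t / 2)
      = 2 / log 2 * logSobolevConst q * (powSum q t / 2 * log (powSum q t / 2)) := by ring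
    _ ≤ 2 / log 2 * logSobolevConst q * ((powSum q t / 2 - 1) *
        ((2 : ℝ) ^ (q - 1) * log ((2 : ℝ) ^ (q - 1)) / ((2 : ℝ) ^ (q - 1) - 1))) :=
      mul_le_mul_of_nonneg_left hsecant hc
    _ = 4 * (powSum q t - 2) / q := by
      rw [mul_left_comm, two_div_log_two_mul_logSobolevConst_mul_secant hq1]; ring
    _ ≤ 2 * t * powDiff (q - 1) t := by
      rw [div_le_iff₀ (by linarith)]; linarith

lemma logSobolev_of_le_of_add_eq_two {a b : ℝ} (hb : 0 ≤ b) (hba : b ≤ a)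
    (hab : a + b = 2) (hq1 : 1 < q) (hq2 : q < 2) :
    2 / log 2 * logSobolevConst q * ((a ^ q + b ^ q) / 2) * log ((a ^ q + b ^ q) / 2) ≤
      (a ^ (q - 1) - b ^ (q - 1)) * (a - b) := by
  obtain ⟨t, rfl, rfl⟩ : ∃ t, a = 1 + t ∧ b = 1 - t := ⟨a - 1, by ring, by linarith⟩
  have h := logSobolev_one_add_one_sub hq1 hq2 (t := t) (by linarith) (by linarith)
  unfold powSum powDiff at h
  convert h using 1
  ring

end TwoPoint

theorem two_point_logSobolev_q_lt_two (g : Fin 2 → ℝ) (hg : ∀ i, 0 ≤ g i)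
    (hmean : (g 0 + g 1) / 2 = 1) (q : ℝ) (hq1 : 1 < q) (hq2 : q < 2) :
    (g 0 ^ (q - 1) - g 1 ^ (q - 1)) * (g 0 - g 1) ≥
      2 / Real.log 2 * ((2 : ℝ) ^ (3 - q) * ((2 : ℝ) ^ (q - 1) - 1) / (q * (q - 1))) *
        ((g 0 ^ q + g 1 ^ q) / 2) * Real.log ((g 0 ^ q + g 1 ^ q) / 2) := by
  rcases le_total (g 1) (g 0) with h10 | h01
  · exact TwoPoint.logSobolev_of_le_of_add_eq_two (hg 1) h10 (by linarith) hq1 hq2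
  · have h := TwoPoint.logSobolev_of_le_of_add_eq_two (hg 0) h01 (by linarith) hq1 hq2
    rw [add_comm (g 1 ^ q)] at h
    unfold TwoPoint.logSobolevConst at h
    linarith
end

section
/- For all real q with 1 < q < 2, q > 4 - 2^(3-q). -/
theorem degenerate_case_ineq (q : ℝ) (hq1 : 1 < q) (hq2 : q < 2) :
    q > 4 - (2 : ℝ) ^ (3 - q) := by
  have hlog : Real.log 2 > 0.6931471803 := Real.log_two_gt_d9
  have h1 : (2 : ℝ) ^ (3 - q) = 2 * Real.exp ((2 - q) * Real.log 2) := by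
    rw [show (3 : ℝ) - q = 1 + (2 - q) by ring, Real.rpow_add (by norm_num),
      Real.rpow_one, Real.rpow_def_of_pos (by norm_num)]
    ring_nf
  have h2 : (2 - q) * Real.log 2 + 1 ≤ Real.exp ((2 - q) * Real.log 2) :=
    Real.add_one_le_exp _
  rw [h1]
  nlinarith [h2, hlog]
end

section
/- For all real q with 1 < q < 2 and all real y with 1 < y ≤ 2, setting r = 2^(3-q)(2^(q-1)-1)/(q(q-1)), one has r*q*(q-1)*y^(q-2) + (2-q)*(2^(q-1)-1)*y ≥ (r*q*(q-1) - (2q-2))*2^(q-1) + (2q-2). -/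
open Real

lemma bern_neg {s p : ℝ} (hs : -1 < s) (hp0 : -1 < p) (hp1 : p < 0) :
    1 + p * s ≤ (1 + s) ^ p := by
  have hs1 : (0:ℝ) < 1 + s := by linarith
  have h1 : (1 + s) ^ (-p) ≤ 1 + (-p) * s :=
    rpow_one_add_le_one_add_mul_self hs.le (by linarith) (by linarith)
  have hpos : (0:ℝ) < (1 + s) ^ (-p) := rpow_pos_of_pos hs1 _
  have hrw : (1 + s) ^ p = 1 / (1 + s) ^ (-p) := by
    rw [one_div, ← rpow_neg hs1.le, neg_neg]
  rcases le_or_gt (1 + p * s) 0 with h | h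
  · exact h.trans (by positivity)
  · rw [hrw, le_div_iff₀ hpos]
    nlinarith [mul_le_mul_of_nonneg_left h1 h.le, sq_nonneg (p * s)]

theorem final_reduced_inequality (q y : ℝ) (hq1 : 1 < q) (hq2 : q < 2)
    (hy1 : 1 < y) (hy2 : y ≤ 2) :
    ((2 : ℝ) ^ (3 - q) * ((2 : ℝ) ^ (q - 1) - 1) / (q * (q - 1))) * q * (q - 1) * y ^ (q - 2) +
        (2 - q) * ((2 : ℝ) ^ (q - 1) - 1) * y ≥
      (((2 : ℝ) ^ (3 - q) * ((2 : ℝ) ^ (q - 1) - 1) / (q * (q - 1))) * q * (q - 1) -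
          (2 * q - 2)) * (2 : ℝ) ^ (q - 1) + (2 * q - 2) := by
  have hy0 : (0:ℝ) < y := by linarith
  have hq1' : (0:ℝ) < q - 1 := by linarith
  have hB : (0:ℝ) < (2:ℝ) ^ (q - 1) - 1 := by
    have h := rpow_lt_rpow_of_exponent_lt (by norm_num : (1:ℝ) < 2) hq1'
    rw [rpow_zero] at h
    linarith
  have hq0 : q * (q - 1) ≠ 0 := by positivity
  have hA : (2 : ℝ) ^ (3 - q) * ((2:ℝ) ^ (q - 1) - 1) / (q * (q - 1)) * q * (q - 1)
      = (2:ℝ) ^ (3 - q) * ((2:ℝ) ^ (q - 1) - 1) := by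
    field_simp
  rw [hA]
  have hsplit : y ^ (q - 2) = (2:ℝ) ^ (q - 2) * (y / 2) ^ (q - 2) := by
    rw [← mul_rpow (by norm_num) (by positivity)]
    congr 1
    ring
  have h32 : (2:ℝ) ^ (3 - q) * (2:ℝ) ^ (q - 2) = 2 := by
    rw [← rpow_add (by norm_num : (0:ℝ) < 2), show (3 - q) + (q - 2) = (1:ℝ) by ring, rpow_one]
  have h31 : (2:ℝ) ^ (3 - q) * (2:ℝ) ^ (q - 1) = 4 := by
    rw [← rpow_add (by norm_num : (0:ℝ) < 2), show (3 - q) + (q - 1) = (2:ℝ) by ring,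
      show (2:ℝ) = ((2:ℕ):ℝ) by norm_num, rpow_natCast]
    norm_num
  have key : (2:ℝ) ^ (3 - q) * ((2:ℝ) ^ (q - 1) - 1) * y ^ (q - 2)
      = 2 * (((2:ℝ) ^ (q - 1) - 1) * (y / 2) ^ (q - 2)) := by
    rw [hsplit]
    linear_combination (((2:ℝ) ^ (q - 1) - 1) * (y / 2) ^ (q - 2)) * h32
  have key2 : ((2:ℝ) ^ (3 - q) * ((2:ℝ) ^ (q - 1) - 1) - (2 * q - 2)) * (2:ℝ) ^ (q - 1) + (2 * q - 2)
      = 4 * ((2:ℝ) ^ (q - 1) - 1) - (2 * q - 2) * ((2:ℝ) ^ (q - 1) - 1) := by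
    linear_combination ((2:ℝ) ^ (q - 1) - 1) * h31
  rw [key, key2]
  have hbern : 1 + (q - 2) * (y / 2 - 1) ≤ (y / 2) ^ (q - 2) := by
    have h := bern_neg (s := y / 2 - 1) (p := q - 2) (by linarith) (by linarith) (by linarith)
    have e : (1:ℝ) + (y / 2 - 1) = y / 2 := by ring
    rwa [e] at h
  nlinarith [mul_le_mul_of_nonneg_left hbern (by linarith : (0:ℝ) ≤ 2 * ((2:ℝ) ^ (q - 1) - 1))]
end

section
/- Let C ⊆ F_2^n be a linear code with weight distribution (a_0,...,a_n). Then for every 0 ≤ α ≤ 1, Σ_{k=0}^n a_k α^{n-k} ≤ Σ_{k=0}^n a_k α^k. -/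
open Finset

/-- Number of codewords of `C` of Hamming weight `k`. -/
noncomputable def wtDist (n : ℕ) (C : Submodule (ZMod 2) (Fin n → ZMod 2)) (k : ℕ) : ℕ :=
  Nat.card {x : Fin n → ZMod 2 // x ∈ C ∧ hammingNorm x = k}

/-!
Writing `χ c = (-1) ^ c` and `a = (1 + α) / 2`, `b = (1 - α) / 2`, one has
`α ^ |x| = ∏ i, (a + b χ (x i))` and `α ^ (n - |x|) = ∏ i, (a - b χ (x i))`.
Expanding the products in the Walsh characters `χ_T x = ∏ i ∈ T, χ (x i)` and summing over
the code `C`, the two sides become `∑ T, a ^ (n - |T|) (± b) ^ |T| ∑ x ∈ C, χ_T x`.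
A character sum over a subgroup is `|C|` or `0`, hence nonnegative, so the comparison is
termwise: `(-b) ^ k ≤ b ^ k`.
-/

lemma AddChar.sum_nonneg {G R : Type*} [AddGroup G] [Fintype G] [CommSemiring R] [IsDomain R]
    [PartialOrder R] [IsOrderedRing R] (ψ : AddChar G R) : 0 ≤ ∑ x, ψ x := by
  classical
  rw [AddChar.sum_eq_ite]
  split_ifs <;> positivity

section Walsh

variable (R : Type*) [CommRing R] {ι : Type*}

def signChar : AddChar (ZMod 2) R := AddChar.zmodChar 2 neg_one_sq

variable {R}

lemma signChar_one : signChar R 1 = -1 :=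
  pow_one _

def walshChar (T : Finset ι) : AddChar (ι → ZMod 2) R :=
  ∏ i ∈ T, (signChar R).compAddMonoidHom (Pi.evalAddMonoidHom _ i)

lemma walshChar_apply (T : Finset ι) (x : ι → ZMod 2) :
    walshChar T x = ∏ i ∈ T, signChar R (x i) := by
  simp [walshChar, AddChar.prod_apply]

variable [Fintype ι]

lemma prod_add_mul_signChar_eq_sum_walshChar (a b : R) (x : ι → ZMod 2) :
    ∏ i, (a + b * signChar R (x i)) =
      ∑ T : Finset ι, a ^ (Fintype.card ι - #T) * b ^ #T * walshChar T x := by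
  classical
  simp only [add_comm a]
  rw [Fintype.prod_add]
  simp only [prod_mul_distrib, prod_const, card_compl, walshChar_apply]
  exact Fintype.sum_congr _ _ fun T ↦ by ring

lemma prod_add_mul_signChar_eq_pow (a b : R) (x : ι → ZMod 2) :
    ∏ i, (a + b * signChar R (x i)) =
      (a + b) ^ (Fintype.card ι - hammingNorm x) * (a - b) ^ hammingNorm x := by
  classical
  have factor (c : ZMod 2) : a + b * signChar R c = if c = 0 then a + b else a - b := by
    obtain rfl | rfl : c = 0 ∨ c = 1 := by revert c; decide
    · simp [AddChar.map_zero_eq_one]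
    · simp [signChar_one, sub_eq_add_neg]
  have hcard : #{i | x i = 0} + hammingNorm x = Fintype.card ι := by
    simpa [hammingNorm] using card_filter_add_card_filter_not (s := univ) (fun i ↦ x i = 0)
  simp_rw [factor, prod_ite, prod_const]
  congr 2
  omega

end Walsh

lemma sum_prod_add_neg_mul_signChar_le {R ι : Type*} [CommRing R] [LinearOrder R]
    [IsStrictOrderedRing R] [Fintype ι] (H : AddSubgroup (ι → ZMod 2)) [Fintype H] {a b : R}
    (ha : 0 ≤ a) (hb : 0 ≤ b) :
    ∑ x : H, ∏ i, (a + -b * signChar R (x.1 i)) ≤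
      ∑ x : H, ∏ i, (a + b * signChar R (x.1 i)) := by
  simp_rw [prod_add_mul_signChar_eq_sum_walshChar, sum_comm (s := univ (α := H)), ← mul_sum]
  refine sum_le_sum fun T _ ↦ ?_
  have hwalsh : 0 ≤ ∑ x : H, (walshChar T x.1 : R) :=
    ((walshChar T).compAddMonoidHom H.subtype).sum_nonneg
  have hsign : (-b) ^ #T ≤ b ^ #T :=
    (le_abs_self _).trans (by rw [abs_pow, abs_neg, abs_of_nonneg hb])
  gcongr

lemma sum_pow_card_sub_hammingNorm_le {K ι : Type*} [Field K] [LinearOrder K]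
    [IsStrictOrderedRing K] [Fintype ι] (H : AddSubgroup (ι → ZMod 2)) [Fintype H] {α : K}
    (hα0 : 0 ≤ α) (hα1 : α ≤ 1) :
    ∑ x : H, α ^ (Fintype.card ι - hammingNorm x.1) ≤
      ∑ x : H, α ^ hammingNorm x.1 := by
  have h := sum_prod_add_neg_mul_signChar_le H (a := (1 + α) / 2) (b := (1 - α) / 2)
    (by linarith) (by linarith)
  simp_rw [prod_add_mul_signChar_eq_pow] at h
  convert h using 3 <;> ring

lemma sum_wtDist_mul {R : Type*} [CommSemiring R] (n : ℕ)
    (C : Submodule (ZMod 2) (Fin n → ZMod 2)) [Fintype C] (g : ℕ → R) :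
    ∑ k ∈ range (n + 1), (wtDist n C k : R) * g k = ∑ x : C, g (hammingNorm x.1) := by
  classical
  have hmaps : ∀ x ∈ (univ : Finset C), hammingNorm x.1 ∈ range (n + 1) :=
    fun x _ ↦ mem_range_succ_iff.2 <| hammingNorm_le_card_fintype.trans (Fintype.card_fin n).le
  rw [← sum_fiberwise_of_maps_to hmaps]
  refine sum_congr rfl fun k _ ↦ ?_
  have hcard : wtDist n C k = #{x : C | hammingNorm x.1 = k} := by
    rw [wtDist, ← Fintype.card_subtype, Nat.card_eq_fintype_card]
    exact Fintype.card_congr (Equiv.subtypeSubtypeEquivSubtypeInter _ _).symm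
  rw [hcard, sum_congr rfl fun x hx ↦ by rw [(mem_filter.1 hx).2], sum_const, nsmul_eq_mul]

theorem weight_distribution_reflection (n : ℕ) (C : Submodule (ZMod 2) (Fin n → ZMod 2))
    (α : ℝ) (hα0 : 0 ≤ α) (hα1 : α ≤ 1) :
    ∑ k ∈ Finset.range (n + 1), (wtDist n C k : ℝ) * α ^ (n - k) ≤
      ∑ k ∈ Finset.range (n + 1), (wtDist n C k : ℝ) * α ^ k := by
  classical
  rw [sum_wtDist_mul n C fun k ↦ α ^ (n - k), sum_wtDist_mul n C fun k ↦ α ^ k]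
  have h := sum_pow_card_sub_hammingNorm_le C.toAddSubgroup hα0 hα1
  rw [Fintype.card_fin] at h
  exact h
end

section
/- Let r : Finset [n] → ℕ be the rank function of a binary matroid given by a linear code C (r(S) = rank of columns indexed by S of a generating matrix), let 0 ≤ p ≤ 1 and t = p^{1/(2 ln 2)}. Then log₂ E_{S ∼ p} 2^{|S| - r(S)} ≤ E_{T ∼ t} (|T| - r(T)). -/
open Finset

/-- Rank of the column submatrix of `G` indexed by `T`. -/
noncomputable def colRank {n k : ℕ} (G : Fin k → Fin n → ZMod 2) (T : Finset (Fin n)) : ℕ :=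
  Module.finrank (ZMod 2)
    (Submodule.span (ZMod 2) ((fun j => fun i => G i j) '' (T : Set (Fin n))))

/-!
The nullity `f(S) = |S| - r(S)` grows by `0` or `1` when an element is added to `S`. Induct on
the ground set, conditioning on whether its new element `a` lies in `S`: with `A`, `B` the
conditional expectations of `2^f` given `a ∉ S` and `a ∈ S` we have `A ≤ B ≤ 2A`, and the
two-point inequality `log₂((1-p)A + pB) ≤ (1-t) log₂ A + t log₂ B` reduces the claim to the
induction hypotheses for `f` and for the contraction `S ↦ f(S ∪ {a})`. With `z = B/A - 1 ∈ [0, 1]`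
and `t = p^κ`, the two-point inequality is `log(1 + pz) ≤ p^κ log(1 + z)`, which holds because
`x ↦ x^(-κ) log(1 + xz)` increases on `(0, 1]`.
-/

open Real

local notation "κ" => 1 / (2 * Real.log 2)

lemma one_div_two_log_two_mul_log_one_add_le {s : ℝ} (h0 : 0 ≤ s) (h1 : s ≤ 1) :
    κ * log (1 + s) ≤ s / (1 + s) := by
  -- the chord of the convex `x log x` between `1` and `2`; equality at `s = 1` makes `κ` the
  -- largest constant for which this holds
  have hchord := convexOn_mul_log.2 (Set.mem_Ici.2 zero_le_one) (Set.mem_Ici.2 zero_le_two)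
    (sub_nonneg.2 h1) h0 (sub_add_cancel 1 s)
  simp only [smul_eq_mul, log_one, mul_zero, zero_add] at hchord
  rw [show (1 - s) * 1 + s * 2 = 1 + s by ring] at hchord
  have hlog2 : 0 < log 2 := log_pos one_lt_two
  rw [div_mul_eq_mul_div, one_mul, div_le_div_iff₀ (by positivity) (by linarith)]
  nlinarith

lemma monotoneOn_rpow_neg_mul_log_one_add {z : ℝ} (hz0 : 0 ≤ z) (hz1 : z ≤ 1) :
    MonotoneOn (fun x => x ^ (-κ) * log (1 + x * z)) (Set.Ioc 0 1) := by
  set c : ℝ := κ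
  have hderiv : ∀ x ∈ Set.Ioc (0 : ℝ) 1, HasDerivAt (fun x => x ^ (-c) * log (1 + x * z))
      (x ^ (-c - 1) * (x * z / (1 + x * z) - c * log (1 + x * z))) x := by
    rintro x ⟨hx0, -⟩
    have hxz : 0 < 1 + x * z := by positivity
    have hlog : HasDerivAt (fun x => log (1 + x * z)) (z / (1 + x * z)) x := by
      simpa using (((hasDerivAt_id x).mul_const z).const_add 1).log hxz.ne'
    refine ((hasDerivAt_rpow_const (p := -c) (Or.inl hx0.ne')).mul hlog).congr_deriv ?_
    rw [show x ^ (-c) = x ^ (-c - 1) * x by rw [← rpow_add_one hx0.ne']; ring_nf]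
    ring
  refine monotoneOn_of_deriv_nonneg (convex_Ioc 0 1)
    (fun x hx => (hderiv x hx).continuousAt.continuousWithinAt)
    (fun x hx => ?_) (fun x hx => ?_) <;> rw [interior_Ioc] at hx
  · exact (hderiv x (Set.Ioo_subset_Ioc_self hx)).differentiableAt.differentiableWithinAt
  · rw [(hderiv x (Set.Ioo_subset_Ioc_self hx)).deriv]
    have hxz : 0 ≤ x * z := mul_nonneg hx.1.le hz0
    have := one_div_two_log_two_mul_log_one_add_le hxz (by nlinarith [hx.2])
    exact mul_nonneg (rpow_nonneg hx.1.le _) (by linarith)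

lemma log_one_add_mul_le_rpow_mul_log {p z : ℝ} (hp0 : 0 ≤ p) (hp1 : p ≤ 1) (hz0 : 0 ≤ z)
    (hz1 : z ≤ 1) : log (1 + p * z) ≤ p ^ κ * log (1 + z) := by
  rcases hp0.eq_or_lt with rfl | hp
  · rw [zero_rpow (by positivity)]
    simp
  have hmono := monotoneOn_rpow_neg_mul_log_one_add hz0 hz1 ⟨hp, hp1⟩ ⟨one_pos, le_rfl⟩ hp1
  simp only [one_rpow, one_mul] at hmono
  calc log (1 + p * z) = p ^ κ * (p ^ (-κ) * log (1 + p * z)) := by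
        rw [← mul_assoc, ← rpow_add hp, add_neg_cancel, rpow_zero, one_mul]
    _ ≤ p ^ κ * log (1 + z) := mul_le_mul_of_nonneg_left hmono (rpow_nonneg hp0 _)

lemma logb_two_convex_combination_le {A B p : ℝ} (hA : 0 < A) (hAB : A ≤ B) (hBA : B ≤ 2 * A)
    (hp0 : 0 ≤ p) (hp1 : p ≤ 1) :
    logb 2 ((1 - p) * A + p * B) ≤ (1 - p ^ κ) * logb 2 A + p ^ κ * logb 2 B := by
  set z := B / A - 1
  have hz0 : 0 ≤ z := by rw [sub_nonneg, le_div_iff₀ hA, one_mul]; exact hAB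
  have hz1 : z ≤ 1 := by rw [sub_le_iff_le_add, div_le_iff₀ hA]; linarith
  have hB : B = A * (1 + z) := by simp only [z]; field_simp; ring
  have hlog := log_one_add_mul_le_rpow_mul_log hp0 hp1 hz0 hz1
  rw [show (1 - p) * A + p * B = A * (1 + p * z) by rw [hB]; ring, hB,
    logb_mul hA.ne' (by positivity), logb_mul hA.ne' (by positivity)]
  have : logb 2 (1 + p * z) ≤ p ^ κ * logb 2 (1 + z) := by
    simp only [logb, mul_div_assoc']
    exact div_le_div_of_nonneg_right hlog (log_nonneg one_le_two)
  linarith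

/-- `E_{S ∼ p} g(S)` for a random subset `S` of `s` containing each element independently with
probability `p`. -/
noncomputable def bernoulliExpect {ι : Type*} (p : ℝ) (s : Finset ι) (g : Finset ι → ℝ) : ℝ :=
  ∑ S ∈ s.powerset, p ^ S.card * (1 - p) ^ (s.card - S.card) * g S

section bernoulliExpect

variable {ι : Type*} {p : ℝ}

@[simp]
lemma bernoulliExpect_empty (g : Finset ι → ℝ) : bernoulliExpect p ∅ g = g ∅ := by
  simp [bernoulliExpect]

lemma bernoulliExpect_insert [DecidableEq ι] {a : ι} {s : Finset ι} (ha : a ∉ s)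
    (g : Finset ι → ℝ) :
    bernoulliExpect p (insert a s) g =
      (1 - p) * bernoulliExpect p s g + p * bernoulliExpect p s fun S => g (insert a S) := by
  simp only [bernoulliExpect, sum_powerset_insert ha, mul_sum, card_insert_of_notMem ha]
  congr 1 <;> refine sum_congr rfl fun S hS => ?_
  · rw [Nat.succ_sub (card_le_card (mem_powerset.1 hS)), pow_succ]
    ring
  · rw [card_insert_of_notMem fun h => ha (mem_powerset.1 hS h), Nat.succ_sub_succ, pow_succ]
    ring

lemma bernoulliExpect_const_mul (c : ℝ) (s : Finset ι) (g : Finset ι → ℝ) :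
    bernoulliExpect p s (fun S => c * g S) = c * bernoulliExpect p s g := by
  simp only [bernoulliExpect, mul_sum]
  exact sum_congr rfl fun S _ => by ring

lemma bernoulliExpect_mono (hp0 : 0 ≤ p) (hp1 : p ≤ 1) (s : Finset ι) {g h : Finset ι → ℝ}
    (hgh : ∀ S, g S ≤ h S) : bernoulliExpect p s g ≤ bernoulliExpect p s h :=
  sum_le_sum fun S _ => mul_le_mul_of_nonneg_left (hgh S)
    (mul_nonneg (pow_nonneg hp0 _) (pow_nonneg (sub_nonneg.2 hp1) _))

lemma bernoulliExpect_pos [DecidableEq ι] (hp0 : 0 ≤ p) (hp1 : p ≤ 1) (s : Finset ι)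
    {g : Finset ι → ℝ} (hg : ∀ S, 0 < g S) : 0 < bernoulliExpect p s g := by
  induction s using Finset.induction_on generalizing g with
  | empty => simpa using hg ∅
  | insert a s ha ih =>
    rw [bernoulliExpect_insert ha]
    have hB := ih fun S => hg (insert a S)
    rcases hp1.lt_or_eq with hp | rfl
    · exact add_pos_of_pos_of_nonneg (mul_pos (sub_pos.2 hp) (ih hg)) (mul_nonneg hp0 hB.le)
    · simpa using hB

theorem logb_bernoulliExpect_two_rpow_le [DecidableEq ι] (hp0 : 0 ≤ p) (hp1 : p ≤ 1)
    (s : Finset ι) {f : Finset ι → ℝ}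
    (hf : ∀ S e, f S ≤ f (insert e S) ∧ f (insert e S) ≤ f S + 1) :
    logb 2 (bernoulliExpect p s fun S => 2 ^ f S) ≤ bernoulliExpect (p ^ κ) s f := by
  induction s using Finset.induction_on generalizing f with
  | empty => simp [logb_rpow]
  | insert a s ha ih =>
    set A := bernoulliExpect p s fun S => 2 ^ f S
    set B := bernoulliExpect p s fun S => 2 ^ f (insert a S)
    have hA : 0 < A := bernoulliExpect_pos hp0 hp1 s fun S => by positivity
    have hAB : A ≤ B := bernoulliExpect_mono hp0 hp1 s fun S =>
      rpow_le_rpow_of_exponent_le one_le_two (hf S a).1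
    have hBA : B ≤ 2 * A := by
      rw [← bernoulliExpect_const_mul]
      refine bernoulliExpect_mono hp0 hp1 s fun S => ?_
      calc (2 : ℝ) ^ f (insert a S) ≤ 2 ^ (f S + 1) :=
            rpow_le_rpow_of_exponent_le one_le_two (hf S a).2
        _ = 2 * 2 ^ f S := by rw [rpow_add_one two_ne_zero, mul_comm]
    have hf_contract : ∀ S e, f (insert a S) ≤ f (insert a (insert e S)) ∧
        f (insert a (insert e S)) ≤ f (insert a S) + 1 := fun S e => by
      rw [Finset.insert_comm a e S]
      exact hf (insert a S) e
    have ht0 : 0 ≤ p ^ κ := rpow_nonneg hp0 _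
    have ht1 : p ^ κ ≤ 1 := rpow_le_one hp0 hp1 (by positivity)
    rw [bernoulliExpect_insert ha, bernoulliExpect_insert ha]
    calc logb 2 ((1 - p) * A + p * B) ≤ (1 - p ^ κ) * logb 2 A + p ^ κ * logb 2 B :=
          logb_two_convex_combination_le hA hAB hBA hp0 hp1
      _ ≤ _ := add_le_add (mul_le_mul_of_nonneg_left (ih hf) (sub_nonneg.2 ht1))
          (mul_le_mul_of_nonneg_left (ih hf_contract) ht0)

end bernoulliExpect

section colRank

variable {n k : ℕ} (G : Fin k → Fin n → ZMod 2)

lemma colRank_mono {S T : Finset (Fin n)} (h : S ⊆ T) : colRank G S ≤ colRank G T :=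
  Submodule.finrank_mono (Submodule.span_mono (Set.image_mono (coe_subset.2 h)))

lemma colRank_insert_le (S : Finset (Fin n)) (e : Fin n) :
    colRank G (insert e S) ≤ colRank G S + 1 := by
  rw [colRank, coe_insert, Set.image_insert_eq, Submodule.span_insert, add_comm]
  refine (Submodule.finrank_add_le_finrank_add_finrank _ _).trans (Nat.add_le_add_right ?_ _)
  exact (finrank_span_le_card _).trans (by simp)

lemma card_sub_colRank_le_insert (S : Finset (Fin n)) (e : Fin n) :
    (S.card : ℝ) - colRank G S ≤ (insert e S).card - colRank G (insert e S) := by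
  by_cases he : e ∈ S
  · rw [insert_eq_of_mem he]
  · have hrank : (colRank G (insert e S) : ℝ) ≤ colRank G S + 1 := by
      exact_mod_cast colRank_insert_le G S e
    rw [card_insert_of_notMem he, Nat.cast_succ]
    linarith

lemma card_insert_sub_colRank_le (S : Finset (Fin n)) (e : Fin n) :
    ((insert e S).card : ℝ) - colRank G (insert e S) ≤ S.card - colRank G S + 1 := by
  have hcard : ((insert e S).card : ℝ) ≤ S.card + 1 := by exact_mod_cast card_insert_le e S
  have hrank : (colRank G S : ℝ) ≤ colRank G (insert e S) := by
    exact_mod_cast colRank_mono G (subset_insert e S)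
  linarith

end colRank

theorem matroid_rank_noise_bound (n k : ℕ) (G : Fin k → Fin n → ZMod 2)
    (p t : ℝ) (hp0 : 0 ≤ p) (hp1 : p ≤ 1) (ht : t = p ^ (1 / (2 * Real.log 2))) :
    Real.logb 2
        (∑ S : Finset (Fin n),
          p ^ S.card * (1 - p) ^ (n - S.card) * 2 ^ ((S.card : ℝ) - colRank G S)) ≤
      ∑ T : Finset (Fin n),
        t ^ T.card * (1 - t) ^ (n - T.card) * ((T.card : ℝ) - colRank G T) := by
  subst ht
  simpa [bernoulliExpect] using logb_bernoulliExpect_two_rpow_le hp0 hp1 univ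
    fun S e => ⟨card_sub_colRank_le_insert G S e, card_insert_sub_colRank_le G S e⟩
end

section
/- Let C ⊆ F_2^n be a linear code with rank function r_C, let 0 ≤ p ≤ 1, t = p^{1/(2 ln 2)}, and Δ ≥ 0. Then Pr_{S ∼ p}[ |S| - r_C(S) ≥ E_{T ∼ t}(|T| - r_C(T)) + Δ ] ≤ 2^{-Δ}. -/
open Finset

open Classical

section Aux

variable {α : Type*} [DecidableEq α]

lemma split_sum (E : Finset α) (a : α) (ha : a ∉ E) (q : ℝ) (X : Finset α → ℝ) :
    ∑ S ∈ (insert a E).powerset,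
        q ^ S.card * (1 - q) ^ ((insert a E).card - S.card) * X S
      = (1 - q) * ∑ S ∈ E.powerset, q ^ S.card * (1 - q) ^ (E.card - S.card) * X S
        + q * ∑ S ∈ E.powerset, q ^ S.card * (1 - q) ^ (E.card - S.card) * X (insert a S) := by
  rw [Finset.sum_powerset_insert ha, Finset.mul_sum, Finset.mul_sum]
  congr 1
  · apply Finset.sum_congr rfl
    intro S hS
    have hSE : S ⊆ E := Finset.mem_powerset.1 hS
    have hc : S.card ≤ E.card := Finset.card_le_card hSE
    rw [Finset.card_insert_of_notMem ha, Nat.succ_sub hc, pow_succ]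
    ring
  · apply Finset.sum_congr rfl
    intro S hS
    have hSE : S ⊆ E := Finset.mem_powerset.1 hS
    have haS : a ∉ S := fun h => ha (hSE h)
    rw [Finset.card_insert_of_notMem ha, Finset.card_insert_of_notMem haS,
      Nat.succ_sub_succ, pow_succ]
    ring

lemma weight_sum (E : Finset α) (q : ℝ) :
    ∑ S ∈ E.powerset, q ^ S.card * (1 - q) ^ (E.card - S.card) = 1 := by
  induction E using Finset.induction_on with
  | empty => simp
  | @insert a E ha ih =>
    have h := split_sum E a ha q (fun _ => 1)
    simp only [mul_one] at h
    rw [h, ih]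
    ring

/-- Key inductive lemma: if `f ∅ = 0` and all increments of `f` lie in `[0,1]`, then
`E_p 2^f ≤ 2^(E_t f)`, provided `1 + p ≤ 2^t`. -/
lemma sum_exp_le (p t : ℝ) (hp0 : 0 ≤ p) (hp1 : p ≤ 1) (ht0 : 0 ≤ t) (ht1 : t ≤ 1)
    (hpt : 1 + p ≤ (2:ℝ) ^ t) (E : Finset α) :
    ∀ f : Finset α → ℝ, f ∅ = 0 →
      (∀ S ⊆ E, ∀ j ∈ E, j ∉ S → f S ≤ f (insert j S) ∧ f (insert j S) ≤ f S + 1) →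
      ∑ S ∈ E.powerset, p ^ S.card * (1 - p) ^ (E.card - S.card) * (2:ℝ) ^ f S ≤
        (2:ℝ) ^ (∑ S ∈ E.powerset, t ^ S.card * (1 - t) ^ (E.card - S.card) * f S) := by
  induction E using Finset.induction_on with
  | empty =>
    intro f hf0 _
    simp [hf0]
  | @insert a E ha ih =>
    intro f hf0 hinc
    rw [split_sum E a ha p _, split_sum E a ha t _]
    set M0 := ∑ S ∈ E.powerset, t ^ S.card * (1 - t) ^ (E.card - S.card) * f S with hM0
    set M1 := ∑ S ∈ E.powerset, t ^ S.card * (1 - t) ^ (E.card - S.card) * f (insert a S)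
      with hM1
    have hWp : ∀ S : Finset α, 0 ≤ p ^ S.card * (1 - p) ^ (E.card - S.card) := by
      intro S
      exact mul_nonneg (pow_nonneg hp0 _) (pow_nonneg (by linarith) _)
    have hWt : ∀ S : Finset α, 0 ≤ t ^ S.card * (1 - t) ^ (E.card - S.card) := by
      intro S
      exact mul_nonneg (pow_nonneg ht0 _) (pow_nonneg (by linarith) _)
    -- increments of f at a, over subsets of E
    have hstep : ∀ S ∈ E.powerset, f S ≤ f (insert a S) ∧ f (insert a S) ≤ f S + 1 := by
      intro S hS
      have hSE : S ⊆ E := Finset.mem_powerset.1 hS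
      exact hinc S (hSE.trans (Finset.subset_insert a E)) a (Finset.mem_insert_self a E)
        (fun h => ha (hSE h))
    -- IH for f restricted to E
    have hIH0 := ih f hf0 (fun S hS j hj hjS =>
      hinc S (hS.trans (Finset.subset_insert a E)) j (Finset.mem_insert_of_mem hj) hjS)
    -- IH for the shifted function g = f (insert a ·) - f {a}
    have hg0 : f (insert a (∅ : Finset α)) - f {a} = 0 := by simp
    have hginc : ∀ S ⊆ E, ∀ j ∈ E, j ∉ S →
        f (insert a S) - f {a} ≤ f (insert a (insert j S)) - f {a} ∧
        f (insert a (insert j S)) - f {a} ≤ f (insert a S) - f {a} + 1 := by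
      intro S hS j hj hjS
      have hja : j ≠ a := fun h => ha (h ▸ hj)
      have hjaS : j ∉ insert a S := by
        simp only [Finset.mem_insert]
        push_neg
        exact ⟨hja, hjS⟩
      have h := hinc (insert a S) (Finset.insert_subset_insert a hS) j
        (Finset.mem_insert_of_mem hj) hjaS
      rw [Finset.insert_comm] at h
      constructor <;> linarith [h.1, h.2]
    have hIHg := ih (fun S => f (insert a S) - f {a}) hg0 hginc
    -- convert hIHg into a bound on L1
    have hL1 : ∑ S ∈ E.powerset, p ^ S.card * (1 - p) ^ (E.card - S.card)
        * (2:ℝ) ^ f (insert a S) ≤ (2:ℝ) ^ M1 := by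
      have hmul := mul_le_mul_of_nonneg_right hIHg
        (Real.rpow_nonneg (by norm_num : (0:ℝ) ≤ 2) (f {a}))
      rw [Finset.sum_mul] at hmul
      have hleft : ∀ S ∈ E.powerset,
          p ^ S.card * (1 - p) ^ (E.card - S.card) * (2:ℝ) ^ (f (insert a S) - f {a})
            * (2:ℝ) ^ f {a}
          = p ^ S.card * (1 - p) ^ (E.card - S.card) * (2:ℝ) ^ f (insert a S) := by
        intro S _
        rw [mul_assoc, ← Real.rpow_add (by norm_num : (0:ℝ) < 2), sub_add_cancel]
      rw [Finset.sum_congr rfl hleft] at hmul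
      have hexp : ∑ S ∈ E.powerset, t ^ S.card * (1 - t) ^ (E.card - S.card)
          * (f (insert a S) - f {a}) = M1 - f {a} := by
        simp only [mul_sub]
        rw [Finset.sum_sub_distrib, ← Finset.sum_mul, weight_sum, one_mul]
      rw [hexp, ← Real.rpow_add (by norm_num : (0:ℝ) < 2), sub_add_cancel] at hmul
      exact hmul
    -- bounds on δ = M1 - M0
    have hδ0 : 0 ≤ M1 - M0 := by
      have : M0 ≤ M1 := by
        apply Finset.sum_le_sum
        intro S hS
        exact mul_le_mul_of_nonneg_left (hstep S hS).1 (hWt S)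
      linarith
    have hδ1 : M1 - M0 ≤ 1 := by
      have h1 : M1 - M0 = ∑ S ∈ E.powerset, t ^ S.card * (1 - t) ^ (E.card - S.card)
          * (f (insert a S) - f S) := by
        simp only [mul_sub]
        rw [Finset.sum_sub_distrib]
      have h2 : ∑ S ∈ E.powerset, t ^ S.card * (1 - t) ^ (E.card - S.card)
          * (f (insert a S) - f S) ≤ ∑ S ∈ E.powerset,
            t ^ S.card * (1 - t) ^ (E.card - S.card) * 1 := by
        apply Finset.sum_le_sum
        intro S hS
        exact mul_le_mul_of_nonneg_left (by linarith [(hstep S hS).2]) (hWt S)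
      simp only [mul_one] at h2
      rw [weight_sum] at h2
      linarith
    -- key two-point Jensen step
    have hkey : (1 - p) * (2:ℝ) ^ M0 + p * (2:ℝ) ^ M1
        ≤ (2:ℝ) ^ ((1 - t) * M0 + t * M1) := by
      set δ := M1 - M0 with hδ
      have h2M1 : (2:ℝ) ^ M1 = (2:ℝ) ^ M0 * (2:ℝ) ^ δ := by
        rw [← Real.rpow_add (by norm_num : (0:ℝ) < 2)]
        congr 1
        rw [hδ]; ring
      have hjensen : (1 - p) * (1:ℝ) ^ δ + p * (2:ℝ) ^ δ
          ≤ ((1 - p) * 1 + p * 2) ^ δ := by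
        have hcc := (Real.concaveOn_rpow hδ0 hδ1).2
          (Set.mem_Ici.2 (by norm_num : (0:ℝ) ≤ 1))
          (Set.mem_Ici.2 (by norm_num : (0:ℝ) ≤ 2))
          (by linarith : (0:ℝ) ≤ 1 - p) hp0 (by ring)
        simpa [smul_eq_mul] using hcc
      rw [Real.one_rpow] at hjensen
      have h1p : ((1 - p) * 1 + p * 2 : ℝ) = 1 + p := by ring
      rw [h1p] at hjensen
      have hmono : (1 + p : ℝ) ^ δ ≤ ((2:ℝ) ^ t) ^ δ :=
        Real.rpow_le_rpow (by linarith) hpt hδ0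
      rw [← Real.rpow_mul (by norm_num : (0:ℝ) ≤ 2)] at hmono
      have hfinal : (1 - p) + p * (2:ℝ) ^ δ ≤ (2:ℝ) ^ (t * δ) := by
        calc (1 - p) + p * (2:ℝ) ^ δ = (1 - p) * 1 + p * (2:ℝ) ^ δ := by ring
        _ ≤ (1 + p) ^ δ := by linarith
        _ ≤ (2:ℝ) ^ (t * δ) := hmono
      have h2M0 : (0:ℝ) < (2:ℝ) ^ M0 := Real.rpow_pos_of_pos (by norm_num) _
      calc (1 - p) * (2:ℝ) ^ M0 + p * (2:ℝ) ^ M1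
          = (2:ℝ) ^ M0 * ((1 - p) + p * (2:ℝ) ^ δ) := by rw [h2M1]; ring
        _ ≤ (2:ℝ) ^ M0 * (2:ℝ) ^ (t * δ) :=
            mul_le_mul_of_nonneg_left hfinal h2M0.le
        _ = (2:ℝ) ^ (M0 + t * δ) := by rw [← Real.rpow_add (by norm_num : (0:ℝ) < 2)]
        _ = (2:ℝ) ^ ((1 - t) * M0 + t * M1) := by congr 1; rw [hδ]; ring
    calc (1 - p) * (∑ S ∈ E.powerset, p ^ S.card * (1 - p) ^ (E.card - S.card)
            * (2:ℝ) ^ f S)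
          + p * (∑ S ∈ E.powerset, p ^ S.card * (1 - p) ^ (E.card - S.card)
            * (2:ℝ) ^ f (insert a S))
        ≤ (1 - p) * (2:ℝ) ^ M0 + p * (2:ℝ) ^ M1 := by
          apply add_le_add
          · exact mul_le_mul_of_nonneg_left hIH0 (by linarith)
          · exact mul_le_mul_of_nonneg_left hL1 hp0
      _ ≤ (2:ℝ) ^ ((1 - t) * M0 + t * M1) := hkey

end Aux

lemma quarter_rpow : ((4:ℝ))⁻¹ ^ (1 - 1 / (2 * Real.log 2)) = Real.exp 1 / 4 := by
  have hL : (0:ℝ) < Real.log 2 := Real.log_pos one_lt_two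
  have hlog4 : Real.log (4:ℝ) = 2 * Real.log 2 := by
    rw [show (4:ℝ) = 2 ^ 2 by norm_num, Real.log_pow]
    push_cast; ring
  rw [Real.rpow_def_of_pos (by norm_num : (0:ℝ) < (4:ℝ)⁻¹)]
  have hexp : Real.log (4:ℝ)⁻¹ * (1 - 1 / (2 * Real.log 2)) = 1 - Real.log 4 := by
    rw [Real.log_inv, hlog4]
    field_simp
    ring
  rw [hexp, Real.exp_sub, Real.exp_log (by norm_num : (0:ℝ) < 4)]

lemma crux (p : ℝ) (hp0 : 0 ≤ p) (hp1 : p ≤ 1) :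
    1 + p ≤ (2:ℝ) ^ (p ^ (1 / (2 * Real.log 2))) := by
  have hL : (0:ℝ) < Real.log 2 := Real.log_pos one_lt_two
  set c : ℝ := 1 / (2 * Real.log 2) with hc
  have hc0 : 0 < c := by positivity
  have hc1 : c ≤ 1 := by
    rw [hc, div_le_one (by positivity)]
    nlinarith [Real.log_two_gt_d9]
  have he4 : Real.exp 1 / 4 ≤ Real.log 2 := by
    nlinarith [Real.exp_one_lt_d9, Real.log_two_gt_d9]
  rcases le_or_gt p ((4:ℝ))⁻¹ with hcase | hcase
  · -- small p : use 1 + x ≤ exp x and p ≤ log 2 * p ^ c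
    rcases eq_or_lt_of_le hp0 with h0 | h0
    · rw [← h0, Real.zero_rpow (ne_of_gt hc0), Real.rpow_zero]
      norm_num
    · have h2 : p ^ c * p ^ (1 - c) = p := by
        rw [← Real.rpow_add h0]
        simp
      have hpc : 0 ≤ p ^ c := Real.rpow_nonneg hp0 _
      have h1 : p ^ (1 - c) ≤ ((4:ℝ))⁻¹ ^ (1 - c) :=
        Real.rpow_le_rpow hp0 hcase (by linarith)
      have hple : p ≤ Real.log 2 * p ^ c := by
        calc p = p ^ c * p ^ (1 - c) := h2.symm
          _ ≤ p ^ c * (Real.exp 1 / 4) := by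
              rw [← quarter_rpow, ← hc]
              exact mul_le_mul_of_nonneg_left h1 hpc
          _ ≤ p ^ c * Real.log 2 := mul_le_mul_of_nonneg_left he4 hpc
          _ = Real.log 2 * p ^ c := mul_comm _ _
      calc 1 + p ≤ 1 + Real.log 2 * p ^ c := by linarith
        _ ≤ Real.exp (Real.log 2 * p ^ c) := by
            linarith [Real.add_one_le_exp (Real.log 2 * p ^ c)]
        _ = 2 ^ (p ^ c) := (Real.rpow_def_of_pos (by norm_num) _).symm
  · -- large p : F x = log 2 * x ^ c - log (1 + x) is antitone on [1/4, 1], F 1 = 0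
    have hu : ∀ x ∈ Set.Icc ((4:ℝ))⁻¹ 1, 1 + x ≤ 2 * x ^ (1 - c) := by
      have hconv : ConvexOn ℝ (Set.Ici 0)
          ((fun y : ℝ => 1 + y) - fun y : ℝ => (2:ℝ) • y ^ (1 - c)) := by
        apply ConvexOn.sub
        · exact (convexOn_const 1 (convex_Ici 0)).add (convexOn_id (convex_Ici 0))
        · exact (Real.concaveOn_rpow (by linarith) (by linarith)).smul (by norm_num)
      intro x hx
      have hxseg : x ∈ segment ℝ ((4:ℝ))⁻¹ 1 := by
        rw [segment_eq_Icc (by norm_num : ((4:ℝ))⁻¹ ≤ 1)]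
        exact hx
      have := hconv.le_on_segment (Set.mem_Ici.2 (by norm_num : (0:ℝ) ≤ (4:ℝ)⁻¹))
        (Set.mem_Ici.2 (by norm_num : (0:ℝ) ≤ 1)) hxseg
      simp only [Pi.sub_apply, smul_eq_mul] at this
      have hq : (1:ℝ) + (4:ℝ)⁻¹ - 2 * ((4:ℝ))⁻¹ ^ (1 - c) ≤ 0 := by
        rw [hc, quarter_rpow]
        nlinarith [Real.exp_one_gt_d9]
      have h1 : (1:ℝ) + 1 - 2 * (1:ℝ) ^ (1 - c) = 0 := by
        rw [Real.one_rpow]; ring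
      have hmax : ((1:ℝ) + (4:ℝ)⁻¹ - 2 * ((4:ℝ))⁻¹ ^ (1 - c)) ⊔
          ((1:ℝ) + 1 - 2 * (1:ℝ) ^ (1 - c)) ≤ 0 := by
        apply sup_le hq (le_of_eq h1)
      have := le_trans this hmax
      linarith
    have hF : AntitoneOn (fun x : ℝ => Real.log 2 * x ^ c - Real.log (1 + x))
        (Set.Icc ((4:ℝ))⁻¹ 1) := by
      apply antitoneOn_of_deriv_nonpos (convex_Icc _ _)
      · apply ContinuousOn.sub
        · apply continuousOn_const.mul
          intro x hx
          exact (Real.continuousAt_rpow_const x c (Or.inl (by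
            have := hx.1; positivity))).continuousWithinAt
        · apply ContinuousOn.log
          · exact continuousOn_const.add continuousOn_id
          · intro x hx
            have := hx.1
            have h4 : (0:ℝ) < (4:ℝ)⁻¹ := by norm_num
            nlinarith
      · rw [interior_Icc]
        intro x hx
        have hx0 : (0:ℝ) < x := lt_trans (by norm_num) hx.1
        have hd : HasDerivAt (fun x : ℝ => Real.log 2 * x ^ c - Real.log (1 + x))
            (Real.log 2 * (c * x ^ (c - 1)) - 1 / (1 + x)) x := by
          exact ((Real.hasDerivAt_rpow_const (Or.inl hx0.ne')).const_mul (Real.log 2)).sub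
            (((hasDerivAt_id x).const_add 1).log (ne_of_gt (by simp only [id_eq]; linarith)))
        exact hd.differentiableAt.differentiableWithinAt
      · rw [interior_Icc]
        intro x hx
        have hx0 : (0:ℝ) < x := lt_trans (by norm_num) hx.1
        have hd : HasDerivAt (fun x : ℝ => Real.log 2 * x ^ c - Real.log (1 + x))
            (Real.log 2 * (c * x ^ (c - 1)) - 1 / (1 + x)) x := by
          exact ((Real.hasDerivAt_rpow_const (Or.inl hx0.ne')).const_mul (Real.log 2)).sub
            (((hasDerivAt_id x).const_add 1).log (ne_of_gt (by simp only [id_eq]; linarith)))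
        rw [hd.deriv]
        have hkey := hu x ⟨hx.1.le, hx.2.le⟩
        have hLc : Real.log 2 * c = 1 / 2 := by
          rw [hc]; field_simp
        have hprod : x ^ (c - 1) * x ^ (1 - c) = 1 := by
          rw [← Real.rpow_add hx0]
          norm_num
        have hpos1 : (0:ℝ) < x ^ (c - 1) := Real.rpow_pos_of_pos hx0 _
        have hpos2 : (0:ℝ) < x ^ (1 - c) := Real.rpow_pos_of_pos hx0 _
        have h1x : (0:ℝ) < 1 + x := by linarith
        -- log2 * (c * x^(c-1)) = x^(c-1)/2 ≤ 1/(1+x)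
        have hgoal : x ^ (c - 1) / 2 ≤ 1 / (1 + x) := by
          rw [div_le_div_iff₀ (by norm_num) h1x]
          nlinarith [mul_le_mul_of_nonneg_left hkey hpos1.le]
        have heq : Real.log 2 * (c * x ^ (c - 1)) = x ^ (c - 1) / 2 := by
          rw [show Real.log 2 * (c * x ^ (c - 1)) = (Real.log 2 * c) * x ^ (c - 1) by ring,
            hLc]
          ring
        rw [heq]
        linarith
    have hp14 : p ∈ Set.Icc ((4:ℝ))⁻¹ 1 := ⟨hcase.le, hp1⟩
    have h1m : (1:ℝ) ∈ Set.Icc ((4:ℝ))⁻¹ 1 := ⟨by norm_num, le_refl 1⟩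
    have hFle := hF hp14 h1m hp1
    simp only [Real.one_rpow, mul_one] at hFle
    have hlog12 : Real.log (1 + 1 : ℝ) = Real.log 2 := by norm_num
    rw [hlog12] at hFle
    -- hFle : log 2 - log 2 ≤ log 2 * p ^ c - log (1 + p)
    have hlogle : Real.log (1 + p) ≤ Real.log 2 * p ^ c := by linarith
    calc 1 + p = Real.exp (Real.log (1 + p)) := (Real.exp_log (by linarith)).symm
      _ ≤ Real.exp (Real.log 2 * p ^ c) := Real.exp_le_exp.2 hlogle
      _ = 2 ^ (p ^ c) := (Real.rpow_def_of_pos (by norm_num) _).symm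

lemma colRank_insert_bounds {n k : ℕ} (G : Fin k → Fin n → ZMod 2) (S : Finset (Fin n))
    (j : Fin n) :
    colRank G S ≤ colRank G (insert j S) ∧ colRank G (insert j S) ≤ colRank G S + 1 := by
  constructor
  · unfold colRank
    have hsub : Submodule.span (ZMod 2) ((fun j0 => fun i => G i j0) '' (S : Set (Fin n)))
        ≤ Submodule.span (ZMod 2)
          ((fun j0 => fun i => G i j0) '' ((insert j S : Finset (Fin n)) : Set (Fin n))) := by
      apply Submodule.span_mono
      apply Set.image_mono
      rw [Finset.coe_insert]
      exact Set.subset_insert _ _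
    exact Submodule.finrank_mono hsub
  · unfold colRank
    rw [Finset.coe_insert, Set.image_insert_eq, Submodule.span_insert]
    refine le_trans (Submodule.finrank_add_le_finrank_add_finrank _ _) ?_
    have h1 : Module.finrank (ZMod 2)
        (Submodule.span (ZMod 2) ({(fun i => G i j)} : Set (Fin k → ZMod 2))) ≤ 1 := by
      have := finrank_span_le_card (R := ZMod 2) ({(fun i => G i j)} : Set (Fin k → ZMod 2))
      simpa using this
    omega

theorem matroid_tail_bound (n k : ℕ) (G : Fin k → Fin n → ZMod 2)
    (p t Δ : ℝ) (hp0 : 0 ≤ p) (hp1 : p ≤ 1) (ht : t = p ^ (1 / (2 * Real.log 2)))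
    (hΔ : 0 ≤ Δ) :
    ∑ S ∈ Finset.univ.filter (fun S : Finset (Fin n) =>
        (∑ T : Finset (Fin n),
            t ^ T.card * (1 - t) ^ (n - T.card) * ((T.card : ℝ) - colRank G T)) + Δ ≤
          (S.card : ℝ) - colRank G S),
      p ^ S.card * (1 - p) ^ (n - S.card) ≤ 2 ^ (-Δ) := by
  have hL : (0:ℝ) < Real.log 2 := Real.log_pos one_lt_two
  have hc0 : (0:ℝ) < 1 / (2 * Real.log 2) := by positivity
  have ht0 : 0 ≤ t := by rw [ht]; exact Real.rpow_nonneg hp0 _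
  have ht1 : t ≤ 1 := by rw [ht]; exact Real.rpow_le_one hp0 hp1 hc0.le
  have hpt : 1 + p ≤ (2:ℝ) ^ t := by rw [ht]; exact crux p hp0 hp1
  set μ : ℝ := ∑ T : Finset (Fin n),
      t ^ T.card * (1 - t) ^ (n - T.card) * ((T.card : ℝ) - colRank G T) with hμ
  have hf0 : ((∅ : Finset (Fin n)).card : ℝ) - colRank G ∅ = 0 := by
    simp [colRank]
  have hinc : ∀ S ⊆ (Finset.univ : Finset (Fin n)), ∀ j ∈ (Finset.univ : Finset (Fin n)),
      j ∉ S → ((S.card : ℝ) - colRank G S ≤ ((insert j S).card : ℝ) - colRank G (insert j S))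
        ∧ (((insert j S).card : ℝ) - colRank G (insert j S) ≤ ((S.card : ℝ) - colRank G S) + 1) := by
    intro S _ j _ hjS
    obtain ⟨h1, h2⟩ := colRank_insert_bounds G S j
    have hcard : (insert j S).card = S.card + 1 := Finset.card_insert_of_notMem hjS
    have h1' : (colRank G S : ℝ) ≤ colRank G (insert j S) := by exact_mod_cast h1
    have h2' : (colRank G (insert j S) : ℝ) ≤ (colRank G S : ℝ) + 1 := by
      exact_mod_cast h2
    constructor <;> · rw [hcard]; push_cast; linarith
  have key : ∑ S : Finset (Fin n), p ^ S.card * (1 - p) ^ (n - S.card)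
      * (2:ℝ) ^ ((S.card : ℝ) - colRank G S) ≤ (2:ℝ) ^ μ := by
    have h := sum_exp_le p t hp0 hp1 ht0 ht1 hpt (Finset.univ : Finset (Fin n))
      (fun S => (S.card : ℝ) - colRank G S) hf0 hinc
    simp only [Finset.powerset_univ, Finset.card_univ, Fintype.card_fin] at h
    rw [hμ]
    exact h
  have hW : ∀ S : Finset (Fin n), 0 ≤ p ^ S.card * (1 - p) ^ (n - S.card) := by
    intro S
    exact mul_nonneg (pow_nonneg hp0 _) (pow_nonneg (by linarith) _)
  have h2pos : (0:ℝ) < 2 := by norm_num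
  calc ∑ S ∈ Finset.univ.filter (fun S : Finset (Fin n) =>
          μ + Δ ≤ (S.card : ℝ) - colRank G S),
        p ^ S.card * (1 - p) ^ (n - S.card)
      ≤ ∑ S ∈ Finset.univ.filter (fun S : Finset (Fin n) =>
          μ + Δ ≤ (S.card : ℝ) - colRank G S),
        p ^ S.card * (1 - p) ^ (n - S.card) * (2:ℝ) ^ ((S.card : ℝ) - colRank G S)
          * (2:ℝ) ^ (-μ - Δ) := by
        apply Finset.sum_le_sum
        intro S hS
        have hSf := (Finset.mem_filter.1 hS).2
        have h1 : (1:ℝ) ≤ (2:ℝ) ^ ((S.card : ℝ) - colRank G S) * (2:ℝ) ^ (-μ - Δ) := by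
          rw [← Real.rpow_add h2pos]
          calc (1:ℝ) = (2:ℝ) ^ (0:ℝ) := (Real.rpow_zero 2).symm
            _ ≤ _ := Real.rpow_le_rpow_of_exponent_le one_le_two (by linarith)
        have := mul_le_mul_of_nonneg_left h1 (hW S)
        rw [mul_one] at this
        calc p ^ S.card * (1 - p) ^ (n - S.card)
            ≤ p ^ S.card * (1 - p) ^ (n - S.card)
              * ((2:ℝ) ^ ((S.card : ℝ) - colRank G S) * (2:ℝ) ^ (-μ - Δ)) := this
          _ = p ^ S.card * (1 - p) ^ (n - S.card) * (2:ℝ) ^ ((S.card : ℝ) - colRank G S)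
              * (2:ℝ) ^ (-μ - Δ) := by ring
    _ ≤ ∑ S : Finset (Fin n),
        p ^ S.card * (1 - p) ^ (n - S.card) * (2:ℝ) ^ ((S.card : ℝ) - colRank G S)
          * (2:ℝ) ^ (-μ - Δ) := by
        apply Finset.sum_le_sum_of_subset_of_nonneg (Finset.filter_subset _ _)
        intro S _ _
        have hr1 : (0:ℝ) ≤ (2:ℝ) ^ ((S.card : ℝ) - colRank G S) := Real.rpow_nonneg (by norm_num) _
        have hr2 : (0:ℝ) ≤ (2:ℝ) ^ (-μ - Δ) := Real.rpow_nonneg (by norm_num) _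
        exact mul_nonneg (mul_nonneg (hW S) hr1) hr2
    _ = (∑ S : Finset (Fin n),
        p ^ S.card * (1 - p) ^ (n - S.card) * (2:ℝ) ^ ((S.card : ℝ) - colRank G S))
          * (2:ℝ) ^ (-μ - Δ) := by
        rw [Finset.sum_mul]
    _ ≤ (2:ℝ) ^ μ * (2:ℝ) ^ (-μ - Δ) := by
        exact mul_le_mul_of_nonneg_right key (Real.rpow_nonneg (by norm_num) _)
    _ = 2 ^ (-Δ) := by
        rw [← Real.rpow_add h2pos]
        congr 1
        ring
end
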